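/- arXiv:2008.10500 — 3 statements merged into one kernel-verified Lean document; each statement's English description precedes it below -/
import Mathlib

section
/- Let α > 1 be an irrational real number. Then as t → 0⁺, the second derivative L_α''(t) satisfies L_α''(t) = π²/(3αt³) + O(1/t²). -/
/-!
Differentiating termwise twice gives `L_α''(t) = t⁻² ∑_ℓ K(t⌊α(ℓ+1)⌋)` with
`K(x) = x² e^{-x} / (1 - e^{-x})² = ((x/2) / sinh(x/2))²`. The kernel `K` is decreasing on
`(0, ∞)`, bounded by `1`, and `∫₀^∞ K = ∑_k ∫₀^∞ k x² e^{-kx} dx = 2 ζ(2) = π²/3`. The sample points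
`t⌊α(ℓ+1)⌋` lie in `[αtℓ, αt(ℓ+1)]`, so `αt ∑_ℓ K(t⌊α(ℓ+1)⌋)` is a Riemann sum of the monotone
function `K` with mesh `αt`; comparing it with the integral costs only `O(αt)`, hence
`∑_ℓ K(t⌊α(ℓ+1)⌋) = π²/(3αt) + O(1)`.
-/

open Filter Topology Real Asymptotics

/-- `L_α(t) = -∑_{ℓ ≥ 1} log(1 - e^{-t⌊αℓ⌋})`. -/
noncomputable def LBeatty (α : ℝ) (t : ℝ) : ℝ :=
  -∑' ℓ : ℕ, Real.log (1 - Real.exp (-t * (⌊α * (ℓ + 1)⌋ : ℤ)))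

open MeasureTheory Set

noncomputable def expKernel (x : ℝ) : ℝ := x ^ 2 * exp (-x) / (1 - exp (-x)) ^ 2

theorem mul_sinh_le_mul_sinh {u v : ℝ} (hu : 0 ≤ u) (huv : u ≤ v) :
    v * sinh u ≤ u * sinh v := by
  refine hasSum_le (fun n => ?_) ((hasSum_sinh u).mul_left v) ((hasSum_sinh v).mul_left u)
  rw [mul_div_assoc', mul_div_assoc']
  gcongr ?_ / _
  calc v * u ^ (2 * n + 1) = u * v * u ^ (2 * n) := by ring
    _ ≤ u * v * v ^ (2 * n) := by gcongr; exact mul_nonneg hu (hu.trans huv)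
    _ = u * v ^ (2 * n + 1) := by ring

theorem one_sub_exp_neg_eq (x : ℝ) : 1 - exp (-x) = 2 * exp (-(x / 2)) * sinh (x / 2) := by
  have h₁ : exp (-(x / 2)) * exp (x / 2) = 1 := by rw [← exp_add]; norm_num
  have h₂ : exp (-(x / 2)) * exp (-(x / 2)) = exp (-x) := by rw [← exp_add]; ring_nf
  rw [sinh_eq]
  linear_combination -h₁ + h₂

theorem expKernel_eq (x : ℝ) : expKernel x = (x / 2) ^ 2 / sinh (x / 2) ^ 2 := by
  have h : exp (-(x / 2)) ^ 2 = exp (-x) := by rw [← exp_nat_mul]; ring_nf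
  rw [expKernel, one_sub_exp_neg_eq, mul_pow, mul_pow, h]
  field_simp

theorem expKernel_nonneg (x : ℝ) : 0 ≤ expKernel x := by
  unfold expKernel; positivity

theorem expKernel_le_one {x : ℝ} (hx : 0 ≤ x) : expKernel x ≤ 1 := by
  rw [expKernel_eq]
  apply div_le_one_of_le₀ _ (sq_nonneg _)
  exact pow_le_pow_left₀ (by linarith) (self_le_sinh_iff.2 (by linarith)) 2

theorem expKernel_antitoneOn : AntitoneOn expKernel (Ioi 0) := by
  intro x (hx : 0 < x) y (hy : 0 < y) hxy
  have hsx : 0 < sinh (x / 2) := sinh_pos_iff.2 (by linarith)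
  have key : y / 2 * sinh (x / 2) ≤ x / 2 * sinh (y / 2) :=
    mul_sinh_le_mul_sinh (by linarith) (by linarith)
  rw [expKernel_eq, expKernel_eq, div_le_div_iff₀ (by positivity) (by positivity), ← mul_pow,
    ← mul_pow]
  exact pow_le_pow_left₀ (by positivity) key 2

theorem hasSum_expKernel {x : ℝ} (hx : 0 < x) :
    HasSum (fun k : ℕ => k * (x ^ 2 * exp (-(k * x)))) (expKernel x) := by
  have hr : ‖exp (-x)‖ < 1 := by
    rw [norm_of_nonneg (exp_pos _).le, exp_lt_one_iff]; linarith
  have h := (hasSum_coe_mul_geometric_of_norm_lt_one hr).mul_left (x ^ 2)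
  rw [show x ^ 2 * (exp (-x) / (1 - exp (-x)) ^ 2) = expKernel x by rw [expKernel]; ring] at h
  refine h.congr_fun fun k => ?_
  rw [← exp_nat_mul]
  ring_nf

theorem integral_sq_mul_exp_neg_mul {r : ℝ} (hr : 0 < r) :
    ∫ x in Ioi 0, x ^ 2 * exp (-(r * x)) = 2 / r ^ 3 := by
  have h := integral_rpow_mul_exp_neg_mul_Ioi (a := 3) (by norm_num) hr
  norm_num at h
  rw [h]
  ring

theorem integral_expKernel : ∫ x in Ioi 0, expKernel x = π ^ 2 / 3 := by
  set f : ℕ → ℝ → ℝ := fun k x => k * (x ^ 2 * exp (-(k * x)))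
  have hf : ∀ k : ℕ, ∫ x in Ioi 0, f k x = 2 * (1 / (k : ℝ) ^ 2) := by
    intro k
    rcases k.eq_zero_or_pos with rfl | hk
    · simp [f]
    rw [integral_const_mul, integral_sq_mul_exp_neg_mul (Nat.cast_pos.2 hk)]
    field_simp
  have hf_int : ∀ k, IntegrableOn (f k) (Ioi 0) := by
    intro k
    rcases k.eq_zero_or_pos with rfl | hk
    · simp [f]
    refine Integrable.of_integral_ne_zero ?_
    rw [hf]
    positivity
  have hf_norm : ∀ k, ∫ x in Ioi 0, ‖f k x‖ = ∫ x in Ioi 0, f k x := fun k =>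
    setIntegral_congr_fun measurableSet_Ioi fun x hx => norm_of_nonneg (by
      have : (0 : ℝ) < x := hx
      positivity)
  have hsum := hasSum_integral_of_summable_integral_norm hf_int
    (by simpa only [hf_norm, hf] using (hasSum_zeta_two.mul_left 2).summable)
  rw [← setIntegral_congr_fun measurableSet_Ioi fun x hx => (hasSum_expKernel hx).tsum_eq,
    ← hsum.tsum_eq, tsum_congr hf, (hasSum_zeta_two.mul_left 2).tsum_eq]
  ring

theorem integrableOn_expKernel : IntegrableOn expKernel (Ioi 0) :=
  Integrable.of_integral_ne_zero (by rw [integral_expKernel]; positivity)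

section RiemannSum

variable {g : ℝ → ℝ} {M : ℝ} {y : ℕ → ℝ}

theorem sum_range_le_integral_add (hg : AntitoneOn g (Ioi 0))
    (hg0 : ∀ x, 0 < x → 0 ≤ g x) (hgM : ∀ x, 0 < x → g x ≤ M) (hgi : IntegrableOn g (Ioi 0))
    (hy0 : ∀ n, 0 < y n) (hny : ∀ n : ℕ, (n : ℝ) ≤ y n) (n : ℕ) :
    ∑ i ∈ Finset.range n, g (y i) ≤ (∫ x in Ioi 0, g x) + 2 * M := by
  have hsub : Icc (1 : ℝ) (1 + n) ⊆ Ioi 0 := fun x hx => lt_of_lt_of_le one_pos hx.1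
  have htail : ∑ i ∈ Finset.range n, g (y (i + 2)) ≤ ∫ x in (1 : ℝ)..1 + n, g x := by
    refine le_trans (Finset.sum_le_sum fun i _ => ?_) (hg.mono hsub).sum_le_integral
    refine hg (by simp; positivity) (hy0 _) ?_
    have := hny (i + 2)
    push_cast at this ⊢
    linarith
  have hint : ∫ x in (1 : ℝ)..1 + n, g x ≤ ∫ x in Ioi 0, g x := by
    rw [intervalIntegral.integral_of_le (by simp)]
    refine setIntegral_mono_set hgi ?_ (Eventually.of_forall fun x hx => ?_)
    · exact (ae_restrict_iff' measurableSet_Ioi).2 (ae_of_all _ hg0)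
    · exact lt_of_lt_of_le one_pos hx.1.le
  calc ∑ i ∈ Finset.range n, g (y i)
      ≤ ∑ i ∈ Finset.range (n + 2), g (y i) :=
        Finset.sum_le_sum_of_subset_of_nonneg (by simp) fun i _ _ => hg0 _ (hy0 i)
    _ = ∑ i ∈ Finset.range n, g (y (i + 2)) + g (y 1) + g (y 0) := by
        rw [Finset.sum_range_succ', Finset.sum_range_succ']
    _ ≤ (∫ x in Ioi 0, g x) + 2 * M := by
        linarith [hgM _ (hy0 0), hgM _ (hy0 1)]

theorem intervalIntegral_le_sum_range (hg : AntitoneOn g (Ioi 0))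
    (hy0 : ∀ n, 0 < y n) (hyn : ∀ n : ℕ, y n ≤ n + 1) (n : ℕ) :
    ∫ x in (1 : ℝ)..1 + n, g x ≤ ∑ i ∈ Finset.range n, g (y i) := by
  have hsub : Icc (1 : ℝ) (1 + n) ⊆ Ioi 0 := fun x hx => lt_of_lt_of_le one_pos hx.1
  refine (hg.mono hsub).integral_le_sum.trans (Finset.sum_le_sum fun i _ => ?_)
  exact hg (hy0 i) (by simp; positivity) (by linarith [hyn i])

theorem integral_sub_le_tsum (hg : AntitoneOn g (Ioi 0))
    (hg0 : ∀ x, 0 < x → 0 ≤ g x) (hgM : ∀ x, 0 < x → g x ≤ M) (hgi : IntegrableOn g (Ioi 0))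
    (hy0 : ∀ n, 0 < y n) (hny : ∀ n : ℕ, (n : ℝ) ≤ y n)
    (hyn : ∀ n : ℕ, y n ≤ n + 1) :
    (∫ x in Ioi 0, g x) - M ≤ ∑' n, g (y n) := by
  have hsum : Summable fun n => g (y n) :=
    summable_of_sum_range_le (fun n => hg0 _ (hy0 n))
      (sum_range_le_integral_add hg hg0 hgM hgi hy0 hny)
  have hlim : Tendsto (fun n : ℕ => ∫ x in (1 : ℝ)..1 + n, g x) atTop
      (𝓝 (∫ x in Ioi 1, g x)) :=
    intervalIntegral_tendsto_integral_Ioi 1 (hgi.mono_set (Ioi_subset_Ioi zero_le_one))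
      (tendsto_atTop_add_const_left _ 1 tendsto_natCast_atTop_atTop)
  have htail : ∫ x in Ioi 1, g x ≤ ∑' n, g (y n) :=
    le_of_tendsto' hlim fun n => (intervalIntegral_le_sum_range hg hy0 hyn n).trans
      (hsum.sum_le_tsum _ fun i _ => hg0 _ (hy0 i))
  have hhead : ∫ x in (0 : ℝ)..1, g x ≤ M := by
    have h := intervalIntegral.norm_integral_le_of_norm_le_const (f := g) (a := 0) (b := 1)
      (C := M) fun x hx => by
        have hx : 0 < x := by simpa using hx.1
        rw [norm_of_nonneg (hg0 x hx)]
        exact hgM x hx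
    simp only [sub_zero, abs_one, mul_one] at h
    exact (le_abs_self _).trans h
  rw [← intervalIntegral.integral_interval_add_Ioi hgi
    (hgi.mono_set (Ioi_subset_Ioi zero_le_one))]
  linarith

theorem abs_tsum_sub_integral_le (hg : AntitoneOn g (Ioi 0))
    (hg0 : ∀ x, 0 < x → 0 ≤ g x) (hgM : ∀ x, 0 < x → g x ≤ M) (hgi : IntegrableOn g (Ioi 0))
    (hy0 : ∀ n, 0 < y n) (hny : ∀ n : ℕ, (n : ℝ) ≤ y n)
    (hyn : ∀ n : ℕ, y n ≤ n + 1) :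
    |∑' n, g (y n) - ∫ x in Ioi 0, g x| ≤ 2 * M := by
  have hM : 0 ≤ M := (hg0 1 one_pos).trans (hgM 1 one_pos)
  have hupper := Real.tsum_le_of_sum_range_le (fun n => hg0 _ (hy0 n))
    (sum_range_le_integral_add hg hg0 hgM hgi hy0 hny)
  have hlower := integral_sub_le_tsum hg hg0 hgM hgi hy0 hny hyn
  exact abs_sub_le_iff.2 ⟨by linarith, by linarith⟩

end RiemannSum

theorem hasDerivAt_tsum_of_dominated_Ioi {f f' : ℕ → ℝ → ℝ}
    (hf : ∀ ℓ t, 0 < t → HasDerivAt (f ℓ) (f' ℓ t) t)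
    (hf' : ∀ b, 0 < b → ∃ u : ℕ → ℝ, Summable u ∧ ∀ ℓ t, b ≤ t → ‖f' ℓ t‖ ≤ u ℓ)
    (hsum : ∀ t, 0 < t → Summable fun ℓ => f ℓ t) {t : ℝ} (ht : 0 < t) :
    HasDerivAt (fun t => ∑' ℓ, f ℓ t) (∑' ℓ, f' ℓ t) t := by
  obtain ⟨u, hu, hfu⟩ := hf' (t / 2) (half_pos ht)
  have ht' : t ∈ Ioi (t / 2) := half_lt_self ht
  exact hasDerivAt_tsum_of_isPreconnected hu isOpen_Ioi isPreconnected_Ioi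
    (fun ℓ s hs => hf ℓ s ((half_pos ht).trans hs)) (fun ℓ s hs => hfu ℓ s (le_of_lt hs))
    ht' (hsum t ht) ht'

noncomputable def logSeries (c : ℕ → ℝ) (t : ℝ) : ℝ := -∑' ℓ, log (1 - exp (-t * c ℓ))

noncomputable def expRatio (k : ℕ) (c t : ℝ) : ℝ :=
  c ^ k * exp (-t * c) / (1 - exp (-t * c)) ^ k

theorem one_sub_exp_neg_mul_ne_zero {c t : ℝ} (h : t * c ≠ 0) : 1 - exp (-t * c) ≠ 0 := by
  rw [sub_ne_zero, ne_comm, Ne, exp_eq_one_iff, neg_mul, neg_eq_zero]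
  exact h

theorem hasDerivAt_one_sub_exp_neg_mul (c t : ℝ) :
    HasDerivAt (fun t => 1 - exp (-t * c)) (c * exp (-t * c)) t := by
  refine ((((hasDerivAt_id t).neg.mul_const c).exp).const_sub 1).congr_deriv ?_
  simp only [Pi.neg_apply, id_eq, neg_mul, one_mul]
  ring

theorem hasDerivAt_log_one_sub_exp_neg_mul {c t : ℝ} (h : t * c ≠ 0) :
    HasDerivAt (fun t => log (1 - exp (-t * c))) (expRatio 1 c t) t := by
  refine ((hasDerivAt_one_sub_exp_neg_mul c t).log (one_sub_exp_neg_mul_ne_zero h)).congr_deriv ?_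
  simp [expRatio]

theorem hasDerivAt_expRatio_one {c t : ℝ} (h : t * c ≠ 0) :
    HasDerivAt (expRatio 1 c) (-expRatio 2 c t) t := by
  have hnum : HasDerivAt (fun t => c * exp (-t * c)) (c * (exp (-t * c) * -c)) t := by
    simpa using (((hasDerivAt_id t).neg.mul_const c).exp).const_mul c
  have hfun : expRatio 1 c = fun t => c * exp (-t * c) / (1 - exp (-t * c)) := by
    funext t; simp [expRatio]
  rw [hfun]
  refine (hnum.div (hasDerivAt_one_sub_exp_neg_mul c t) (one_sub_exp_neg_mul_ne_zero h)).congr_deriv ?_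
  simp only [expRatio]
  ring

theorem expRatio_nonneg (k : ℕ) {c t : ℝ} (hc : 0 ≤ c) (ht : 0 ≤ t) : 0 ≤ expRatio k c t := by
  have : 0 ≤ 1 - exp (-t * c) := by
    rw [sub_nonneg, exp_le_one_iff]; nlinarith
  unfold expRatio; positivity

theorem expRatio_le (k : ℕ) {b c t : ℝ} (hb : 0 < b) (hbt : b ≤ t) (hc : 1 ≤ c) :
    expRatio k c t ≤ c ^ k * exp (-b * c) / (1 - exp (-b)) ^ k := by
  have hexp : exp (-t * c) ≤ exp (-b * c) := exp_le_exp.2 (by nlinarith)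
  have hden : 1 - exp (-b) ≤ 1 - exp (-t * c) := by
    have : exp (-t * c) ≤ exp (-b) := exp_le_exp.2 (by nlinarith)
    linarith
  have hpos : 0 < 1 - exp (-b) := by
    rw [sub_pos, exp_lt_one_iff]; linarith
  exact div_le_div₀ (by positivity) (mul_le_mul_of_nonneg_left hexp (by positivity))
    (pow_pos hpos k) (pow_le_pow_left₀ hpos.le hden k)

section LogSeries

variable {c : ℕ → ℝ} {A t : ℝ}

theorem exists_summable_bound_expRatio (k : ℕ)
    (hc : ∀ ℓ : ℕ, (ℓ : ℝ) + 1 ≤ c ℓ) (hcA : ∀ ℓ : ℕ, c ℓ ≤ A * (ℓ + 1)) {b : ℝ} (hb : 0 < b) :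
    ∃ u : ℕ → ℝ, Summable u ∧ ∀ ℓ t, b ≤ t → ‖expRatio k (c ℓ) t‖ ≤ u ℓ := by
  have hr : ‖exp (-b)‖ < 1 := by
    rw [norm_of_nonneg (exp_pos _).le, exp_lt_one_iff]; linarith
  have hu : Summable fun ℓ : ℕ => ((ℓ + 1 : ℕ) : ℝ) ^ k * exp (-b) ^ (ℓ + 1) :=
    (summable_nat_add_iff (f := fun n : ℕ => (n : ℝ) ^ k * exp (-b) ^ n) 1).2
      (summable_pow_mul_geometric_of_norm_lt_one k hr)
  refine ⟨_, hu.mul_left (A ^ k / (1 - exp (-b)) ^ k), fun ℓ t hbt => ?_⟩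
  have hc1 : 1 ≤ c ℓ := le_trans (by simp) (hc ℓ)
  have hpos : 0 < 1 - exp (-b) := by
    rw [sub_pos, exp_lt_one_iff]; linarith
  have hexp : exp (-b * c ℓ) ≤ exp (-b) ^ (ℓ + 1) := by
    rw [← exp_nat_mul, exp_le_exp]; push_cast; nlinarith [hc ℓ]
  rw [norm_of_nonneg (expRatio_nonneg k (by linarith) (hb.le.trans hbt))]
  refine (expRatio_le k hb hbt hc1).trans ?_
  calc c ℓ ^ k * exp (-b * c ℓ) / (1 - exp (-b)) ^ k
      ≤ (A * (ℓ + 1)) ^ k * exp (-b) ^ (ℓ + 1) / (1 - exp (-b)) ^ k := by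
        have hA : 0 ≤ A * (ℓ + 1) := by linarith [hcA ℓ]
        gcongr ?_ / _
        exact mul_le_mul (pow_le_pow_left₀ (by linarith) (hcA ℓ) k) hexp (exp_pos _).le
          (pow_nonneg hA k)
    _ = _ := by rw [mul_pow]; push_cast; ring

theorem summable_expRatio (k : ℕ) (hc : ∀ ℓ : ℕ, (ℓ : ℝ) + 1 ≤ c ℓ)
    (hcA : ∀ ℓ : ℕ, c ℓ ≤ A * (ℓ + 1)) (ht : 0 < t) :
    Summable fun ℓ => expRatio k (c ℓ) t :=
  have ⟨_, hu, hle⟩ := exists_summable_bound_expRatio k hc hcA ht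
  hu.of_norm_bounded fun ℓ => hle ℓ t le_rfl

theorem hasDerivAt_logSeries (hc : ∀ ℓ : ℕ, (ℓ : ℝ) + 1 ≤ c ℓ)
    (hcA : ∀ ℓ : ℕ, c ℓ ≤ A * (ℓ + 1)) (ht : 0 < t) :
    HasDerivAt (logSeries c) (-∑' ℓ, expRatio 1 (c ℓ) t) t := by
  have hc0 (ℓ : ℕ) : 0 < c ℓ := by linarith [hc ℓ, (ℓ.cast_nonneg : (0 : ℝ) ≤ ℓ)]
  have hsum (t : ℝ) (ht : 0 < t) : Summable fun ℓ => log (1 - exp (-t * c ℓ)) := by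
    simpa [expRatio, sub_eq_add_neg] using
      Real.summable_log_one_add_of_summable (summable_expRatio 0 hc hcA ht).neg
  exact (hasDerivAt_tsum_of_dominated_Ioi
    (fun ℓ t ht => hasDerivAt_log_one_sub_exp_neg_mul (mul_pos ht (hc0 ℓ)).ne')
    (fun b hb => exists_summable_bound_expRatio 1 hc hcA hb) hsum ht).neg

theorem hasDerivAt_tsum_expRatio_one (hc : ∀ ℓ : ℕ, (ℓ : ℝ) + 1 ≤ c ℓ)
    (hcA : ∀ ℓ : ℕ, c ℓ ≤ A * (ℓ + 1)) (ht : 0 < t) :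
    HasDerivAt (fun t => ∑' ℓ, expRatio 1 (c ℓ) t) (-∑' ℓ, expRatio 2 (c ℓ) t) t := by
  have hc0 (ℓ : ℕ) : 0 < c ℓ := by linarith [hc ℓ, (ℓ.cast_nonneg : (0 : ℝ) ≤ ℓ)]
  rw [← tsum_neg]
  refine hasDerivAt_tsum_of_dominated_Ioi
    (fun ℓ t ht => hasDerivAt_expRatio_one (mul_pos ht (hc0 ℓ)).ne') (fun b hb => ?_)
    (fun t ht => summable_expRatio 1 hc hcA ht) ht
  obtain ⟨u, hu, hle⟩ := exists_summable_bound_expRatio 2 hc hcA hb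
  exact ⟨u, hu, fun ℓ t hbt => (norm_neg _).trans_le (hle ℓ t hbt)⟩

theorem deriv_deriv_logSeries (hc : ∀ ℓ : ℕ, (ℓ : ℝ) + 1 ≤ c ℓ)
    (hcA : ∀ ℓ : ℕ, c ℓ ≤ A * (ℓ + 1)) (ht : 0 < t) :
    deriv (deriv (logSeries c)) t = ∑' ℓ, expRatio 2 (c ℓ) t := by
  have hderiv : deriv (logSeries c) =ᶠ[𝓝 t] fun s => -∑' ℓ, expRatio 1 (c ℓ) s :=
    eventually_of_mem (Ioi_mem_nhds ht) fun s hs => (hasDerivAt_logSeries hc hcA hs).deriv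
  rw [hderiv.deriv_eq]
  exact (hasDerivAt_tsum_expRatio_one hc hcA ht).neg.deriv.trans (neg_neg _)

end LogSeries

theorem expRatio_two_eq {c t : ℝ} (ht : t ≠ 0) : expRatio 2 c t = expKernel (t * c) / t ^ 2 := by
  rw [expRatio, expKernel, neg_mul]
  field_simp

noncomputable def beatty (α : ℝ) (ℓ : ℕ) : ℝ := ⌊α * (ℓ + 1)⌋

theorem LBeatty_eq_logSeries (α : ℝ) : LBeatty α = logSeries (beatty α) := rfl

theorem add_one_le_beatty {α : ℝ} (hα : 1 ≤ α) (ℓ : ℕ) : (ℓ : ℝ) + 1 ≤ beatty α ℓ := by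
  have : ((ℓ + 1 : ℕ) : ℤ) ≤ ⌊α * (ℓ + 1)⌋ :=
    Int.le_floor.2 (by push_cast; nlinarith [(ℓ.cast_nonneg : (0 : ℝ) ≤ ℓ)])
  unfold beatty
  exact_mod_cast this

theorem beatty_le (α : ℝ) (ℓ : ℕ) : beatty α ℓ ≤ α * (ℓ + 1) := Int.floor_le _

theorem mul_le_beatty {α : ℝ} (hα : 1 ≤ α) (ℓ : ℕ) : α * ℓ ≤ beatty α ℓ := by
  have := Int.sub_one_lt_floor (α * (ℓ + 1))
  unfold beatty
  linarith

theorem abs_tsum_expKernel_sub_le {α t : ℝ} (hα : 1 ≤ α) (ht : 0 < t) :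
    |∑' ℓ, expKernel (t * beatty α ℓ) - π ^ 2 / 3 / (α * t)| ≤ 2 := by
  have hα0 : 0 < α := by linarith
  have hs : 0 < α * t := by positivity
  have hg : AntitoneOn (fun y => expKernel (α * t * y)) (Ioi 0) := fun x hx y hy hxy =>
    expKernel_antitoneOn (mul_pos hs hx) (mul_pos hs hy) (by gcongr)
  have hgi : IntegrableOn (fun y => expKernel (α * t * y)) (Ioi 0) :=
    (integrableOn_Ioi_comp_mul_left_iff _ 0 hs).2 (by simpa using integrableOn_expKernel)
  have hint : ∫ y in Ioi 0, expKernel (α * t * y) = π ^ 2 / 3 / (α * t) := by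
    rw [integral_comp_mul_left_Ioi _ 0 hs, mul_zero, integral_expKernel, smul_eq_mul,
      inv_mul_eq_div]
  have hterm (ℓ : ℕ) : expKernel (α * t * (beatty α ℓ / α)) = expKernel (t * beatty α ℓ) := by
    congr 1; field_simp
  have key := abs_tsum_sub_integral_le hg (fun x _ => expKernel_nonneg _)
    (fun x hx => expKernel_le_one (mul_pos hs hx).le) hgi (y := fun ℓ => beatty α ℓ / α)
    (fun ℓ => div_pos (by linarith [add_one_le_beatty hα ℓ]) hα0)
    (fun ℓ => (le_div_iff₀ hα0).2 (by linarith [mul_le_beatty hα ℓ]))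
    (fun ℓ => (div_le_iff₀ hα0).2 (by linarith [beatty_le α ℓ]))
  simpa only [hterm, hint, mul_one] using key

theorem abs_deriv_deriv_LBeatty_sub_le {α t : ℝ} (hα : 1 ≤ α) (ht : 0 < t) :
    |deriv (deriv (LBeatty α)) t - π ^ 2 / (3 * α * t ^ 3)| ≤ 2 / t ^ 2 := by
  rw [LBeatty_eq_logSeries, deriv_deriv_logSeries (add_one_le_beatty hα) (beatty_le α) ht,
    tsum_congr fun ℓ => expRatio_two_eq ht.ne', tsum_div_const]
  have ht2 : 0 < t ^ 2 := by positivity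
  calc |(∑' ℓ, expKernel (t * beatty α ℓ)) / t ^ 2 - π ^ 2 / (3 * α * t ^ 3)|
      = |∑' ℓ, expKernel (t * beatty α ℓ) - π ^ 2 / 3 / (α * t)| / t ^ 2 := by
        rw [← abs_of_pos ht2, ← abs_div, abs_of_pos ht2]
        congr 1
        field_simp
    _ ≤ 2 / t ^ 2 := div_le_div_of_nonneg_right (abs_tsum_expKernel_sub_le hα ht) ht2.le

theorem stmt8_general (α : ℝ) (hα : 1 < α) :
    (fun t : ℝ => deriv (deriv (LBeatty α)) t - π ^ 2 / (3 * α * t ^ 3))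
      =O[𝓝[>] (0 : ℝ)] (fun t => 1 / t ^ 2) := by
  refine isBigO_iff.2 ⟨2, ?_⟩
  filter_upwards [self_mem_nhdsWithin] with t (ht : 0 < t)
  rw [norm_eq_abs, norm_of_nonneg (by positivity), mul_one_div]
  exact abs_deriv_deriv_LBeatty_sub_le hα.le ht

theorem stmt8 (α : ℝ) (hα : 1 < α) (hirr : Irrational α) :
    (fun t : ℝ => deriv (deriv (LBeatty α)) t - π ^ 2 / (3 * α * t ^ 3))
      =O[𝓝[>] (0 : ℝ)] (fun t => 1 / t ^ 2) :=
  stmt8_general α hα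
end

section
/- Let α > 1 be an irrational real number and t > 0. Then L_α(t) = L_1(αt) + (t/2)·D(αt) + R_α(t) + E_α(t), where D(s) = ∑_{n≥1} 1/(e^{ns} − 1), R_α(t) = ∑_{ℓ≥1} t·B̃₁(αℓ)/(e^{tαℓ} − 1), and E_α(t) = ∑_{ℓ≥1} ∫₀^{{αℓ}} ( ∫₀^u K((αℓ − v)t/2) / (αℓ − v)² dv ) du with K(u) = u²/sinh²(u). -/
/-! For `x ≥ 1` and `t > 0` let `f u = -log (1 - e^{-t(x-u)})` on `u < x`. Then
`f' u = t / (e^{t(x-u)} - 1)` and, because `sinh² (s/2) = (e^s - 1)² / (4 e^s)`,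
`f'' v = K((x-v)t/2) / (x-v)²`. Since `x - {x} = ⌊x⌋`, Taylor's formula with double-integral
remainder between `0` and `{x}` reads
`-log (1 - e^{-t⌊x⌋}) = -log (1 - e^{-tx}) + {x} t / (e^{tx} - 1) + ∫₀^{{x}} ∫₀^u f''`,
and `{x} = 1/2 + B̃₁(x)` splits the middle term into the `D`- and `R`-summands. Summing over
`x = α(ℓ+1)` gives the theorem; all series converge because `1 / (e^s - 1) ≤ 2 / s²` and
`⌊α(ℓ+1)⌋ ≥ ℓ + 1`. -/

open Filter Topology Real Asymptotics

/-- `L₁(t) = -∑_{ℓ ≥ 1} log(1 - e^{-tℓ})`. -/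
noncomputable def LOne (t : ℝ) : ℝ :=
  -∑' ℓ : ℕ, Real.log (1 - Real.exp (-t * (ℓ + 1)))

/-- `D(s) = ∑_{n ≥ 1} 1/(e^{ns} - 1)`. -/
noncomputable def DSum (s : ℝ) : ℝ :=
  ∑' n : ℕ, 1 / (Real.exp ((n + 1) * s) - 1)

/-- `R_α(t) = ∑_{ℓ ≥ 1} t·B̃₁(αℓ)/(e^{tαℓ} - 1)`, with `B̃₁(x) = {x} - 1/2`. -/
noncomputable def RBeatty (α : ℝ) (t : ℝ) : ℝ :=
  ∑' ℓ : ℕ, t * (Int.fract (α * (ℓ + 1)) - 1 / 2) / (Real.exp (t * (α * (ℓ + 1))) - 1)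

/-- `K(u) = u²/sinh²(u)` for `u ≠ 0`, with `K(0) = 1`. -/
noncomputable def KKer (u : ℝ) : ℝ :=
  if u = 0 then 1 else u ^ 2 / Real.sinh u ^ 2

/-- `E_α(t) = ∑_{ℓ ≥ 1} ∫₀^{{αℓ}} ∫₀^u K((αℓ - v)t/2)/(αℓ - v)² dv du`. -/
noncomputable def EBeatty (α : ℝ) (t : ℝ) : ℝ :=
  ∑' ℓ : ℕ, ∫ u in (0 : ℝ)..Int.fract (α * (ℓ + 1)),
    ∫ v in (0 : ℝ)..u, KKer ((α * (ℓ + 1) - v) * t / 2) / (α * (ℓ + 1) - v) ^ 2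

open Set intervalIntegral

lemma summable_one_div_nat_add_one_sq : Summable fun n : ℕ => 1 / ((n : ℝ) + 1) ^ 2 := by
  exact_mod_cast (summable_nat_add_iff 1).mpr (Real.summable_one_div_nat_pow.mpr one_lt_two)

lemma one_div_exp_sub_one_le {s : ℝ} (hs : 0 < s) : 1 / (exp s - 1) ≤ 2 / s ^ 2 := by
  have := quadratic_le_exp_of_nonneg hs.le
  rw [div_le_div_iff₀ (by nlinarith) (by positivity)]
  nlinarith

lemma neg_log_one_sub_exp_neg_nonneg {s : ℝ} (hs : 0 < s) : 0 ≤ -log (1 - exp (-s)) := by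
  have : exp (-s) < 1 := exp_lt_one_iff.2 (neg_neg_of_pos hs)
  exact neg_nonneg.2 (log_nonpos (by linarith) (by linarith [exp_pos (-s)]))

lemma neg_log_one_sub_exp_neg_le {s : ℝ} (hs : 0 < s) :
    -log (1 - exp (-s)) ≤ 1 / (exp s - 1) := by
  have h1 : 1 < exp s := one_lt_exp_iff.2 hs
  have h0 : 0 < 1 - exp (-s) := by rw [exp_neg]; linarith [inv_lt_one_of_one_lt₀ h1]
  have := log_le_sub_one_of_pos (inv_pos.2 h0)
  rw [log_inv] at this
  convert this using 1
  have : exp s - 1 ≠ 0 := by linarith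
  rw [exp_neg]
  field_simp
  ring

lemma summable_one_div_exp_sub_one {c : ℝ} (hc : 0 < c) {m : ℕ → ℝ}
    (hm : ∀ n : ℕ, c * (n + 1) ≤ m n) : Summable fun n => 1 / (exp (m n) - 1) := by
  have hpos : ∀ n : ℕ, 0 < c * (n + 1) := fun n => by positivity
  refine .of_nonneg_of_le (fun n => ?_) (fun n => ?_)
    (summable_one_div_nat_add_one_sq.mul_left (2 / c ^ 2))
  · exact (one_div_pos.2 (sub_pos.2 (one_lt_exp_iff.2 ((hpos n).trans_le (hm n))))).le
  · calc 1 / (exp (m n) - 1) ≤ 2 / m n ^ 2 := one_div_exp_sub_one_le ((hpos n).trans_le (hm n))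
      _ ≤ 2 / (c * (n + 1)) ^ 2 := by gcongr; exact hm n
      _ = 2 / c ^ 2 * (1 / ((n : ℝ) + 1) ^ 2) := by field_simp

lemma summable_mul_fract_sub_half_div_exp_sub_one {c t : ℝ} (hc : 0 < c) (ht : 0 ≤ t)
    {m : ℕ → ℝ} (hm : ∀ n : ℕ, c * (n + 1) ≤ m n) (y : ℕ → ℝ) :
    Summable fun n => t * (Int.fract (y n) - 1 / 2) / (exp (m n) - 1) := by
  refine ((summable_one_div_exp_sub_one hc hm).mul_left (t / 2)).of_norm_bounded fun n => ?_
  have he : 0 < exp (m n) - 1 :=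
    sub_pos.2 (one_lt_exp_iff.2 ((by positivity : 0 < c * (n + 1)).trans_le (hm n)))
  have hθ : |Int.fract (y n) - 1 / 2| ≤ 1 / 2 :=
    abs_le.2 ⟨by linarith [Int.fract_nonneg (y n)], by linarith [Int.fract_lt_one (y n)]⟩
  rw [Real.norm_eq_abs, abs_div, abs_mul, abs_of_nonneg ht, abs_of_pos he, mul_one_div]
  gcongr
  nlinarith

lemma summable_neg_log_one_sub_exp_neg {c : ℝ} (hc : 0 < c) {m : ℕ → ℝ}
    (hm : ∀ n : ℕ, c * (n + 1) ≤ m n) : Summable fun n => -log (1 - exp (-m n)) :=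
  .of_nonneg_of_le
    (fun n => neg_log_one_sub_exp_neg_nonneg ((by positivity : 0 < c * (n + 1)).trans_le (hm n)))
    (fun n => neg_log_one_sub_exp_neg_le ((by positivity : 0 < c * (n + 1)).trans_le (hm n)))
    (summable_one_div_exp_sub_one hc hm)

lemma eq_add_mul_add_integral_integral_of_hasDerivAt {f f' f'' : ℝ → ℝ} {a b : ℝ}
    (hab : a ≤ b) (hf : ∀ u ∈ Icc a b, HasDerivAt f (f' u) u)
    (hf' : ∀ u ∈ Icc a b, HasDerivAt f' (f'' u) u) (hf'' : ContinuousOn f'' (Icc a b)) :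
    f b = f a + (b - a) * f' a + ∫ u in a..b, ∫ v in a..u, f'' v := by
  rw [← uIcc_of_le hab] at hf hf' hf''
  have inner : ∀ u ∈ uIcc a b, ∫ v in a..u, f'' v = f' u - f' a := by
    intro u hu
    have hsub : uIcc a u ⊆ uIcc a b := uIcc_subset_uIcc_left hu
    exact integral_eq_sub_of_hasDerivAt (fun v hv => hf' v (hsub hv))
      (hf''.mono hsub).intervalIntegrable
  have hf'c : ContinuousOn f' (uIcc a b) :=
    fun u hu => (hf' u hu).continuousAt.continuousWithinAt
  rw [integral_congr inner, integral_sub hf'c.intervalIntegrable intervalIntegrable_const,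
    integral_const, integral_eq_sub_of_hasDerivAt hf hf'c.intervalIntegrable, smul_eq_mul]
  ring

lemma KKer_half {s : ℝ} (hs : s ≠ 0) : KKer (s / 2) = s ^ 2 * exp s / (exp s - 1) ^ 2 := by
  rw [KKer, if_neg (div_ne_zero hs two_ne_zero), sinh_eq]
  have he : exp s = exp (s / 2) ^ 2 := by rw [← exp_nat_mul]; ring_nf
  have h1 : exp s - 1 ≠ 0 := sub_ne_zero.2 (mt (exp_eq_one_iff s).1 hs)
  rw [he] at h1 ⊢
  rw [exp_neg]
  have h0 := exp_ne_zero (s / 2)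
  field_simp

lemma KKer_mul_div_sq {t y : ℝ} (ht : t ≠ 0) (hy : y ≠ 0) :
    KKer (y * t / 2) / y ^ 2 = t ^ 2 * exp (t * y) / (exp (t * y) - 1) ^ 2 := by
  rw [mul_comm y t, KKer_half (mul_ne_zero ht hy)]
  field_simp

section Derivatives

variable {t x : ℝ}

lemma hasDerivAt_neg_log_one_sub_exp (ht : 0 < t) {u : ℝ} (hu : u < x) :
    HasDerivAt (fun u => -log (1 - exp (-t * (x - u)))) (t / (exp (t * (x - u)) - 1)) u := by
  have hs : 0 < t * (x - u) := mul_pos ht (sub_pos.2 hu)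
  have h1 : 1 < exp (t * (x - u)) := one_lt_exp_iff.2 hs
  have hlin : HasDerivAt (fun u => -t * (x - u)) t u := by
    simpa using ((hasDerivAt_id u).const_sub x).const_mul (-t)
  have hne : 1 - exp (-t * (x - u)) ≠ 0 := by
    rw [neg_mul, exp_neg]; linarith [inv_lt_one_of_one_lt₀ h1]
  refine ((hlin.exp.const_sub 1).log hne).neg.congr_deriv ?_
  rw [neg_mul, exp_neg]
  field_simp

lemma hasDerivAt_div_exp_sub_one (ht : 0 < t) {v : ℝ} (hv : v < x) :
    HasDerivAt (fun v => t / (exp (t * (x - v)) - 1)) (KKer ((x - v) * t / 2) / (x - v) ^ 2) v := by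
  have hs : 0 < t * (x - v) := mul_pos ht (sub_pos.2 hv)
  have hne : exp (t * (x - v)) - 1 ≠ 0 := (sub_pos.2 (one_lt_exp_iff.2 hs)).ne'
  have hlin : HasDerivAt (fun v => t * (x - v)) (-t) v := by
    simpa using ((hasDerivAt_id v).const_sub x).const_mul t
  refine ((hasDerivAt_const v t).div (hlin.exp.sub_const 1) hne).congr_deriv ?_
  rw [KKer_mul_div_sq ht.ne' (sub_pos.2 hv).ne']
  field_simp
  ring

lemma continuousOn_KKer_div_sq (ht : 0 < t) :
    ContinuousOn (fun v => KKer ((x - v) * t / 2) / (x - v) ^ 2) (Iio x) := by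
  refine ContinuousOn.congr (f := fun v => t ^ 2 * exp (t * (x - v)) / (exp (t * (x - v)) - 1) ^ 2)
    (.div (by fun_prop) (by fun_prop) fun v hv => ?_) fun v hv => ?_
  · exact pow_ne_zero _ (sub_pos.2 (one_lt_exp_iff.2 (mul_pos ht (sub_pos.2 hv)))).ne'
  · exact KKer_mul_div_sq ht.ne' (sub_pos.2 hv).ne'

end Derivatives

lemma neg_log_one_sub_exp_neg_mul_floor {t x : ℝ} (ht : 0 < t) (hx : 1 ≤ x) :
    -log (1 - exp (-(t * ⌊x⌋))) = -log (1 - exp (-(t * x))) + t / 2 / (exp (t * x) - 1)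
      + t * (Int.fract x - 1 / 2) / (exp (t * x) - 1)
      + ∫ u in (0 : ℝ)..Int.fract x, ∫ v in (0 : ℝ)..u, KKer ((x - v) * t / 2) / (x - v) ^ 2 := by
  have hfloor : (1 : ℝ) ≤ ⌊x⌋ := by exact_mod_cast Int.le_floor.2 (by exact_mod_cast hx)
  have hlt : Icc 0 (Int.fract x) ⊆ Iio x := fun v hv => by
    have := Int.floor_add_fract x
    simp only [mem_Iio]; linarith [hv.2]
  have := eq_add_mul_add_integral_integral_of_hasDerivAt (Int.fract_nonneg x)
    (fun u hu => hasDerivAt_neg_log_one_sub_exp ht (hlt hu))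
    (fun v hv => hasDerivAt_div_exp_sub_one ht (hlt hv)) ((continuousOn_KKer_div_sq ht).mono hlt)
  simp only [Int.self_sub_fract, sub_zero, neg_mul] at this
  rw [this]
  ring

theorem stmt10_general (α : ℝ) (hα : 1 < α) (t : ℝ) (ht : 0 < t) :
    LBeatty α t = LOne (α * t) + t / 2 * DSum (α * t) + RBeatty α t + EBeatty α t := by
  have hαt : 0 < α * t := mul_pos (zero_lt_one.trans hα) ht
  have hm : ∀ ℓ : ℕ, α * t * (ℓ + 1) ≤ t * (α * (ℓ + 1)) := fun ℓ => le_of_eq (by ring)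
  have hterm := fun ℓ : ℕ => neg_log_one_sub_exp_neg_mul_floor ht
    (one_le_mul_of_one_le_of_one_le hα.le (le_add_of_nonneg_left (ℓ.cast_nonneg : (0 : ℝ) ≤ ℓ)))
  have hLOne : LOne (α * t) = ∑' ℓ : ℕ, -log (1 - exp (-(t * (α * (ℓ + 1))))) := by
    rw [LOne, ← tsum_neg]; exact tsum_congr fun ℓ => by ring_nf
  have hDSum : t / 2 * DSum (α * t) = ∑' ℓ : ℕ, t / 2 / (exp (t * (α * (ℓ + 1))) - 1) := by
    rw [DSum, ← tsum_mul_left]; exact tsum_congr fun ℓ => by ring_nf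
  have hL := summable_neg_log_one_sub_exp_neg ht (m := fun ℓ => t * ⌊α * (ℓ + 1)⌋) fun ℓ => by
    gcongr; exact_mod_cast Int.le_floor.2 (by push_cast; nlinarith)
  have hB := summable_neg_log_one_sub_exp_neg hαt hm
  have hC := (summable_one_div_exp_sub_one hαt hm).mul_left (t / 2)
  simp only [mul_one_div] at hC
  have hR := summable_mul_fract_sub_half_div_exp_sub_one hαt ht.le hm fun ℓ => α * (ℓ + 1)
  have hE : Summable fun ℓ : ℕ => ∫ u in (0 : ℝ)..Int.fract (α * (ℓ + 1)),
      ∫ v in (0 : ℝ)..u, KKer ((α * (ℓ + 1) - v) * t / 2) / (α * (ℓ + 1) - v) ^ 2 :=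
    (((hL.sub hB).sub hC).sub hR).congr fun ℓ => by rw [hterm ℓ]; ring
  rw [LBeatty, ← tsum_neg, hLOne, hDSum, RBeatty, EBeatty, ← hB.tsum_add hC,
    ← (hB.add hC).tsum_add hR, ← ((hB.add hC).add hR).tsum_add hE]
  simp only [neg_mul]
  exact tsum_congr hterm

theorem stmt10 (α : ℝ) (hα : 1 < α) (hirr : Irrational α) (t : ℝ) (ht : 0 < t) :
    LBeatty α t = LOne (α * t) + t / 2 * DSum (α * t) + RBeatty α t + EBeatty α t :=
  stmt10_general α hα t ht
end

section
/- Let α > 1 be an irrational real number and assume the series J_α(1) = ∑_{ℓ≥1} B̃₁(αℓ)/ℓ converges (in the sense that its partial sums converge). Then as t → 0⁺, R_α(t) = α^{−1}·J_α(1) + o(1). -/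
open Filter Topology Real Asymptotics


noncomputable def phiB (x : ℝ) : ℝ := x / (Real.exp x - 1)

lemma exp_sub_one_pos {x : ℝ} (hx : 0 < x) : 0 < Real.exp x - 1 := by
  have := Real.add_one_lt_exp (ne_of_gt hx)
  linarith

lemma phiB_pos {x : ℝ} (hx : 0 < x) : 0 < phiB x :=
  div_pos hx (exp_sub_one_pos hx)

lemma phiB_le_one {x : ℝ} (hx : 0 < x) : phiB x ≤ 1 := by
  rw [phiB, div_le_one (exp_sub_one_pos hx)]
  have := Real.add_one_le_exp x
  linarith

lemma phiB_le_exp {x : ℝ} (hx : 0 < x) : phiB x ≤ 2 * Real.exp (-(x/2)) := by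
  have h1 : 0 < Real.exp (x/2) - 1 := exp_sub_one_pos (by linarith)
  have h2 : x/2 ≤ Real.exp (x/2) - 1 := by have := Real.add_one_le_exp (x/2); linarith
  have hkey : (x/2) * Real.exp (x/2) ≤ Real.exp x - 1 := by
    have : Real.exp x - 1 = (Real.exp (x/2) - 1) * (Real.exp (x/2) + 1) := by
      have : Real.exp (x/2) * Real.exp (x/2) = Real.exp x := by
        rw [← Real.exp_add]; ring_nf
      nlinarith [this]
    rw [this]
    nlinarith [Real.exp_pos (x/2)]
  rw [phiB, div_le_iff₀ (exp_sub_one_pos hx)]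
  have he : Real.exp (-(x/2)) = (Real.exp (x/2))⁻¹ := by rw [Real.exp_neg]
  rw [he]
  have hep : 0 < Real.exp (x/2) := Real.exp_pos _
  have hx2 : x = 2 * (Real.exp (x/2))⁻¹ * ((x/2) * Real.exp (x/2)) := by
    field_simp
  nlinarith [mul_le_mul_of_nonneg_left hkey (by positivity : (0:ℝ) ≤ 2 * (Real.exp (x/2))⁻¹)]

lemma phiB_anti {x y : ℝ} (hx : 0 < x) (hxy : x ≤ y) : phiB y ≤ phiB x := by
  have hy : 0 < y := lt_of_lt_of_le hx hxy
  have hs := convexOn_exp.secant_mono (a := 0) (x := x) (y := y)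
    (Set.mem_univ _) (Set.mem_univ _) (Set.mem_univ _) (ne_of_gt hx) (ne_of_gt hy) hxy
  simp only [Real.exp_zero, sub_zero] at hs
  rw [phiB, phiB, div_le_div_iff₀ (exp_sub_one_pos hy) (exp_sub_one_pos hx)]
  rw [div_le_div_iff₀ hx hy] at hs
  nlinarith

lemma phiB_tendsto_one : Tendsto phiB (𝓝[>] (0:ℝ)) (𝓝 1) := by
  have hd : HasDerivAt Real.exp 1 0 := by simpa using Real.hasDerivAt_exp 0
  have hslope := hasDerivAt_iff_tendsto_slope.mp hd
  have hsub : 𝓝[>] (0:ℝ) ≤ 𝓝[≠] (0:ℝ) :=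
    nhdsWithin_mono _ (fun x hx => ne_of_gt hx)
  have h2 : Tendsto (slope Real.exp 0) (𝓝[>] (0:ℝ)) (𝓝 1) := hslope.mono_left hsub
  have h3 : Tendsto (fun x => (slope Real.exp 0 x)⁻¹) (𝓝[>] (0:ℝ)) (𝓝 1) := by
    simpa using h2.inv₀ one_ne_zero
  refine h3.congr' ?_
  filter_upwards [self_mem_nhdsWithin] with x hx
  simp only [slope_def_field, Real.exp_zero]
  rw [phiB, sub_zero, inv_div]

lemma core_est (β : ℝ) (hβ : 0 < β) (c : ℕ → ℝ) (hc : ∀ ℓ, |c ℓ| ≤ 1)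
    (J C : ℝ) (hC : ∀ n, |∑ i ∈ Finset.range n, c i - J| ≤ C)
    (M : ℕ) (ε : ℝ)
    (hM : ∀ n, M ≤ n → |∑ i ∈ Finset.range n, c i - J| ≤ ε)
    (t : ℝ) (ht : 0 < t) :
    |(∑' ℓ : ℕ, c ℓ * phiB (t * (β * (ℓ+1)))) - J|
      ≤ C * (1 - phiB (t * (β * ((M:ℝ)+1)))) + ε + |J| * (1 - phiB (t * β)) := by
  set S : ℕ → ℝ := fun n => ∑ i ∈ Finset.range n, c i with hSdef
  set g : ℕ → ℝ := fun ℓ => phiB (t * (β * ((ℓ:ℝ)+1))) with hgdef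
  have harg : ∀ ℓ : ℕ, 0 < t * (β * ((ℓ:ℝ)+1)) := fun ℓ => by positivity
  have hg_pos : ∀ ℓ, 0 < g ℓ := fun ℓ => phiB_pos (harg ℓ)
  have hg_le1 : ∀ ℓ, g ℓ ≤ 1 := fun ℓ => phiB_le_one (harg ℓ)
  have hg_anti : ∀ ℓ, g (ℓ+1) ≤ g ℓ := by
    intro ℓ
    apply phiB_anti (harg ℓ)
    push_cast
    nlinarith
  set Δ : ℕ → ℝ := fun ℓ => g ℓ - g (ℓ+1) with hΔdef
  have hΔ0 : ∀ ℓ, 0 ≤ Δ ℓ := fun ℓ => sub_nonneg.mpr (hg_anti ℓ)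
  have hpart : ∀ n, ∑ i ∈ Finset.range n, Δ i = g 0 - g n := fun n => Finset.sum_range_sub' g n
  have hΔsum : Summable Δ := by
    apply summable_of_sum_range_le hΔ0 (c := g 0)
    intro n; rw [hpart n]; linarith [hg_pos n]
  set r : ℝ := Real.exp (-(t*β/2)) with hrdef
  have hr0 : 0 ≤ r := le_of_lt (Real.exp_pos _)
  have hr1 : r < 1 := by
    rw [hrdef, Real.exp_lt_one_iff]
    nlinarith
  have hgr : ∀ ℓ : ℕ, g ℓ ≤ 2 * r ^ (ℓ+1) := by
    intro ℓ
    have h1 := phiB_le_exp (harg ℓ)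
    have h2 : Real.exp (-(t * (β * ((ℓ:ℝ)+1)) / 2)) = r ^ (ℓ+1) := by
      rw [hrdef, ← Real.exp_nat_mul]
      congr 1; push_cast; ring
    rw [h2] at h1
    exact h1
  have hg0' : Tendsto g atTop (𝓝 0) := by
    have h2 : Tendsto (fun ℓ : ℕ => 2 * r ^ (ℓ+1)) atTop (𝓝 0) := by
      have h3 := (tendsto_pow_atTop_nhds_zero_of_lt_one hr0 hr1).comp (tendsto_add_atTop_nat 1)
      simpa using h3.const_mul 2
    exact squeeze_zero (fun n => le_of_lt (hg_pos n)) hgr h2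
  have hΔtsum : ∑' ℓ, Δ ℓ = g 0 := by
    have h1 := hΔsum.hasSum.tendsto_sum_nat
    have h2 : Tendsto (fun n : ℕ => g 0 - g n) atTop (𝓝 (g 0)) := by
      simpa using tendsto_const_nhds.sub hg0'
    have h2' : Tendsto (fun n => ∑ i ∈ Finset.range n, Δ i) atTop (𝓝 (g 0)) := by
      simpa only [hpart] using h2
    exact tendsto_nhds_unique h1 h2'
  have hq : Summable (fun ℓ => |S (ℓ+1) - J| * Δ ℓ) := by
    apply Summable.of_nonneg_of_le (fun ℓ => mul_nonneg (abs_nonneg _) (hΔ0 ℓ)) (fun ℓ => ?_) (hΔsum.mul_left C)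
    exact mul_le_mul_of_nonneg_right (hC (ℓ+1)) (hΔ0 ℓ)
  have habs : ∀ ℓ, |(S (ℓ+1) - J) * Δ ℓ| = |S (ℓ+1) - J| * Δ ℓ := fun ℓ => by
    rw [abs_mul, abs_of_nonneg (hΔ0 ℓ)]
  have hqsum : Summable (fun ℓ => (S (ℓ+1) - J) * Δ ℓ) := by
    apply Summable.of_abs; simpa only [habs] using hq
  have hhsum : Summable (fun ℓ => S (ℓ+1) * Δ ℓ) := by
    refine (hqsum.add (hΔsum.mul_left J)).congr fun ℓ => ?_
    ring
  have hcg : Summable (fun ℓ => c ℓ * g ℓ) := by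
    apply Summable.of_abs
    have hgeo : Summable (fun ℓ : ℕ => 2 * r ^ (ℓ+1)) := by
      refine ((summable_geometric_of_lt_one hr0 hr1).mul_left (2*r)).congr fun ℓ => ?_
      rw [pow_succ]; ring
    refine Summable.of_nonneg_of_le (fun ℓ => abs_nonneg _) (fun ℓ => ?_) hgeo
    rw [abs_mul, abs_of_nonneg (hg_pos ℓ).le]
    nlinarith [hc ℓ, hgr ℓ, hg_pos ℓ, abs_nonneg (c ℓ)]
  have habel : ∀ N, ∑ ℓ ∈ Finset.range N, c ℓ * g ℓ
      = ∑ ℓ ∈ Finset.range N, S (ℓ+1) * Δ ℓ + S N * g N := by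
    intro N
    induction N with
    | zero => simp [hSdef]
    | succ N ih =>
      rw [Finset.sum_range_succ, Finset.sum_range_succ, ih]
      have hSucc : S (N+1) = S N + c N := Finset.sum_range_succ c N
      rw [hSucc]
      simp only [hΔdef]
      ring
  have hval : (∑' ℓ, c ℓ * g ℓ) = ∑' ℓ, S (ℓ+1) * Δ ℓ := by
    have h1 := hcg.hasSum.tendsto_sum_nat
    have h2 := hhsum.hasSum.tendsto_sum_nat
    have h3 : Tendsto (fun N => S N * g N) atTop (𝓝 0) := by
      have hb : Tendsto (fun N => (C + |J|) * g N) atTop (𝓝 0) := by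
        simpa using hg0'.const_mul (C + |J|)
      refine squeeze_zero_norm (fun N => ?_) hb
      rw [Real.norm_eq_abs, abs_mul]
      have h4 : |S N| ≤ C + |J| := by
        have h5 := hC N
        have h6 := abs_sub_abs_le_abs_sub (S N) J
        linarith
      rw [abs_of_nonneg (hg_pos N).le]
      exact mul_le_mul_of_nonneg_right h4 (hg_pos N).le
    have h5 : Tendsto (fun N => ∑ ℓ ∈ Finset.range N, S (ℓ+1) * Δ ℓ + S N * g N) atTop
        (𝓝 ((∑' ℓ, S (ℓ+1) * Δ ℓ) + 0)) := h2.add h3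
    rw [add_zero] at h5
    have h6 : Tendsto (fun N => ∑ ℓ ∈ Finset.range N, c ℓ * g ℓ) atTop
        (𝓝 (∑' ℓ, S (ℓ+1) * Δ ℓ)) := by
      simpa only [habel] using h5
    exact tendsto_nhds_unique h1 h6
  have hsplit : (∑' ℓ, S (ℓ+1) * Δ ℓ) - J * g 0 = ∑' ℓ, (S (ℓ+1) - J) * Δ ℓ := by
    rw [← hΔtsum, ← tsum_mul_left, ← Summable.tsum_sub hhsum (hΔsum.mul_left J)]
    exact tsum_congr fun ℓ => by ring
  have hb1 : |∑' ℓ, (S (ℓ+1) - J) * Δ ℓ| ≤ ∑' ℓ, |S (ℓ+1) - J| * Δ ℓ := by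
    have hn : Summable fun ℓ => ‖(S (ℓ+1) - J) * Δ ℓ‖ := by
      simpa only [Real.norm_eq_abs, habs] using hq
    have h7 := norm_tsum_le_tsum_norm hn
    simpa only [Real.norm_eq_abs, habs] using h7
  have hsplit2 := Summable.sum_add_tsum_nat_add (f := fun ℓ => |S (ℓ+1) - J| * Δ ℓ) M hq
  have hC0 : 0 ≤ C := le_trans (abs_nonneg _) (hC 0)
  have hε0 : 0 ≤ ε := le_trans (abs_nonneg _) (hM M le_rfl)
  have hhead : ∑ i ∈ Finset.range M, |S (i+1) - J| * Δ i ≤ C * (1 - g M) := by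
    calc ∑ i ∈ Finset.range M, |S (i+1) - J| * Δ i
        ≤ ∑ i ∈ Finset.range M, C * Δ i :=
          Finset.sum_le_sum fun i _ => mul_le_mul_of_nonneg_right (hC (i+1)) (hΔ0 i)
      _ = C * (g 0 - g M) := by rw [← Finset.mul_sum, hpart]
      _ ≤ C * (1 - g M) := by nlinarith [hg_le1 0]
  have hΔtail : Summable (fun i => Δ (i + M)) := (summable_nat_add_iff M).mpr hΔsum
  have hΔtailsum : ∑' i, Δ (i + M) = g M := by
    have h8 := Summable.sum_add_tsum_nat_add (f := Δ) M hΔsum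
    rw [hpart, hΔtsum] at h8; linarith
  have htail_sum : Summable (fun i => |S (i+M+1) - J| * Δ (i+M)) :=
    (summable_nat_add_iff M).mpr hq
  have htail : ∑' i, |S (i+M+1) - J| * Δ (i+M) ≤ ε := by
    have h7 : ∑' i, |S (i+M+1) - J| * Δ (i+M) ≤ ∑' i, ε * Δ (i+M) := by
      exact Summable.tsum_le_tsum (fun i => mul_le_mul_of_nonneg_right
        (hM (i+M+1) (by omega)) (hΔ0 _)) htail_sum (hΔtail.mul_left ε)
    rw [tsum_mul_left, hΔtailsum] at h7
    nlinarith [hg_le1 M, hg_pos M]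
  have hfin : ∑' ℓ, |S (ℓ+1) - J| * Δ ℓ ≤ C * (1 - g M) + ε := by
    rw [← hsplit2]
    exact add_le_add hhead htail
  have hgoal : (∑' ℓ : ℕ, c ℓ * phiB (t * (β * (ℓ+1)))) = ∑' ℓ, c ℓ * g ℓ := rfl
  rw [hgoal]
  have h9 : |J * (g 0 - 1)| = |J| * (1 - g 0) := by
    rw [abs_mul, abs_of_nonpos (by linarith [hg_le1 0] : g 0 - 1 ≤ 0)]; ring
  have hg0eq : g 0 = phiB (t * β) := by simp [hgdef]
  have hgMeq : g M = phiB (t * (β * ((M:ℝ)+1))) := rfl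
  calc |(∑' ℓ, c ℓ * g ℓ) - J|
      = |(∑' ℓ, (S (ℓ+1) - J) * Δ ℓ) + J * (g 0 - 1)| := by rw [hval, ← hsplit]; congr 1; ring
    _ ≤ |∑' ℓ, (S (ℓ+1) - J) * Δ ℓ| + |J * (g 0 - 1)| := abs_add_le _ _
    _ ≤ (C * (1 - g M) + ε) + |J| * (1 - g 0) := by
        have h8 := le_trans hb1 hfin
        linarith [h9.le, h9.ge]
    _ ≤ C * (1 - phiB (t * (β * ((M:ℝ)+1)))) + ε + |J| * (1 - phiB (t * β)) := by
        rw [hg0eq, hgMeq]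

lemma phiB_comp_tendsto {k : ℝ} (hk : 0 < k) :
    Tendsto (fun t : ℝ => phiB (t * k)) (𝓝[>] (0:ℝ)) (𝓝 1) := by
  have h2 : Tendsto (fun t : ℝ => t * k) (𝓝[>] (0:ℝ)) (𝓝[>] (0:ℝ)) := by
    rw [tendsto_nhdsWithin_iff]
    constructor
    · have h3 : Tendsto (fun t : ℝ => t * k) (𝓝 0) (𝓝 (0 * k)) :=
        (continuous_id.mul continuous_const).tendsto 0
      simpa using h3.mono_left nhdsWithin_le_nhds
    · filter_upwards [self_mem_nhdsWithin] with t ht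
      exact mul_pos ht hk
  exact phiB_tendsto_one.comp h2

lemma abel_core (β : ℝ) (hβ : 0 < β) (c : ℕ → ℝ) (hc : ∀ ℓ, |c ℓ| ≤ 1) (J : ℝ)
    (hS : Tendsto (fun n => ∑ i ∈ Finset.range n, c i) atTop (𝓝 J)) :
    Tendsto (fun t => ∑' ℓ : ℕ, c ℓ * phiB (t * (β * (ℓ+1)))) (𝓝[>] (0:ℝ)) (𝓝 J) := by
  rw [Metric.tendsto_nhds]
  intro ε hε
  set S : ℕ → ℝ := fun n => ∑ i ∈ Finset.range n, c i with hSdef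
  obtain ⟨N, hN⟩ := Metric.tendsto_atTop.mp hS 1 one_pos
  set C : ℝ := 1 + ∑ i ∈ Finset.range (N+1), |S i - J| with hCdef
  have hC : ∀ n, |S n - J| ≤ C := by
    intro n
    rcases le_or_gt n N with h | h
    · have h1 : |S n - J| ≤ ∑ i ∈ Finset.range (N+1), |S i - J| :=
        Finset.single_le_sum (f := fun i => |S i - J|) (fun i _ => abs_nonneg _)
          (Finset.mem_range.mpr (by omega))
      have h2 : (0:ℝ) ≤ ∑ i ∈ Finset.range (N+1), |S i - J| :=
        Finset.sum_nonneg fun i _ => abs_nonneg _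
      rw [hCdef]; linarith
    · have h1 := hN n (le_of_lt h)
      rw [Real.dist_eq] at h1
      have h2 : (0:ℝ) ≤ ∑ i ∈ Finset.range (N+1), |S i - J| :=
        Finset.sum_nonneg fun i _ => abs_nonneg _
      rw [hCdef]; linarith
  obtain ⟨M, hM⟩ := Metric.tendsto_atTop.mp hS (ε/4) (by linarith)
  have hM' : ∀ n, M ≤ n → |S n - J| ≤ ε/4 := by
    intro n hn
    have := hM n hn
    rw [Real.dist_eq] at this
    linarith
  have e1 : ∀ᶠ t in 𝓝[>] (0:ℝ), C * (1 - phiB (t * (β * ((M:ℝ)+1)))) < ε/4 := by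
    have h1 : Tendsto (fun t : ℝ => C * (1 - phiB (t * (β * ((M:ℝ)+1))))) (𝓝[>] (0:ℝ)) (𝓝 0) := by
      have h2 := (tendsto_const_nhds (x := (1:ℝ)).sub
        (phiB_comp_tendsto (k := β * ((M:ℝ)+1)) (by positivity))).const_mul C
      simpa using h2
    exact h1.eventually_lt_const (by linarith)
  have e2 : ∀ᶠ t in 𝓝[>] (0:ℝ), |J| * (1 - phiB (t * β)) < ε/4 := by
    have h1 : Tendsto (fun t : ℝ => |J| * (1 - phiB (t * β))) (𝓝[>] (0:ℝ)) (𝓝 0) := by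
      have h2 := (tendsto_const_nhds (x := (1:ℝ)).sub (phiB_comp_tendsto hβ)).const_mul |J|
      simpa using h2
    exact h1.eventually_lt_const (by linarith)
  filter_upwards [e1, e2, self_mem_nhdsWithin] with t h1 h2 ht
  have h3 := core_est β hβ c hc J C hC M (ε/4) hM' t ht
  rw [Real.dist_eq]
  calc |(∑' ℓ : ℕ, c ℓ * phiB (t * (β * (ℓ+1)))) - J|
      ≤ C * (1 - phiB (t * (β * ((M:ℝ)+1)))) + ε/4 + |J| * (1 - phiB (t * β)) := h3
    _ < ε := by linarith

theorem stmt19 (α : ℝ) (hα : 1 < α) (hirr : Irrational α) (J : ℝ)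
    (hJ : Tendsto
      (fun N : ℕ => ∑ ℓ ∈ Finset.Icc 1 N, (Int.fract (α * ℓ) - 1 / 2) / (ℓ : ℝ))
      atTop (𝓝 J)) :
    Tendsto (RBeatty α) (𝓝[>] (0 : ℝ)) (𝓝 (α⁻¹ * J)) := by
  have hα0 : 0 < α := by linarith
  set c : ℕ → ℝ := fun ℓ => (Int.fract (α * ((ℓ:ℝ)+1)) - 1/2) / ((ℓ:ℝ)+1) with hcdef
  have hc : ∀ ℓ, |c ℓ| ≤ 1 := by
    intro ℓ
    have h1 : |Int.fract (α*((ℓ:ℝ)+1)) - 1/2| ≤ 1/2 := by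
      have h2 := Int.fract_nonneg (α*((ℓ:ℝ)+1))
      have h3 := Int.fract_lt_one (α*((ℓ:ℝ)+1))
      rw [abs_le]; constructor <;> linarith
    have h4 : (1:ℝ) ≤ (ℓ:ℝ)+1 := by linarith [Nat.cast_nonneg (α := ℝ) ℓ]
    have h5 : |c ℓ| ≤ |Int.fract (α*((ℓ:ℝ)+1)) - 1/2| := by
      rw [hcdef]
      exact div_le_self (abs_nonneg _) h4 |>.trans_eq rfl |>.trans_eq' (by
        rw [abs_div, abs_of_pos (by positivity : (0:ℝ) < (ℓ:ℝ)+1)])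
    linarith
  have hS : Tendsto (fun n => ∑ i ∈ Finset.range n, c i) atTop (𝓝 J) := by
    refine hJ.congr fun N => ?_
    rw [← Finset.Ico_add_one_right_eq_Icc, Finset.sum_Ico_eq_sum_range]
    refine Finset.sum_congr (by norm_num) fun i _ => ?_
    rw [hcdef]
    push_cast
    rw [add_comm (1:ℝ) (i:ℝ)]
  have hmain := abel_core α hα0 c hc J hS
  have hEq : ∀ t ∈ Set.Ioi (0:ℝ),
      α⁻¹ * (∑' ℓ : ℕ, c ℓ * phiB (t * (α * ((ℓ:ℝ)+1)))) = RBeatty α t := by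
    intro t ht
    rw [RBeatty, ← tsum_mul_left]
    refine tsum_congr fun ℓ => ?_
    have hpos : 0 < t * (α * ((ℓ:ℝ)+1)) := by
      have : (0:ℝ) < t := ht
      positivity
    have hE : Real.exp (t * (α * ((ℓ:ℝ)+1))) - 1 ≠ 0 := ne_of_gt (exp_sub_one_pos hpos)
    have hl : ((ℓ:ℝ)+1) ≠ 0 := by positivity
    rw [hcdef, phiB]
    field_simp
  have h2 : Tendsto (fun t => α⁻¹ * ∑' ℓ : ℕ, c ℓ * phiB (t * (α * ((ℓ:ℝ)+1))))
      (𝓝[>] (0:ℝ)) (𝓝 (α⁻¹ * J)) := hmain.const_mul α⁻¹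
  refine h2.congr' ?_
  filter_upwards [self_mem_nhdsWithin] with t ht
  exact hEq t ht
end
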